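/- CEI ordering prevents re-entrant double settlement: if the settle operation updates the marker sets (moving x from M_active to M_tomb) strictly before any external interaction, then any re-entrant invocation of settle on the same x during the interaction observes x ∉ M_active and aborts; therefore the redistribution output for a given envelope is released at most once. -/
import Mathlib


/-- A well-founded tree of (possibly re-entrant) settle invocations on the same
envelope: each node's children are the calls nested inside its interact step. -/
inductive CallTree where
  | node : List CallTree → CallTree

mutual
  /-- Execute one settle invocation (CEI ordering): first check `x ∈ M_active`;
  on success, the effect (erasing `x` from `M_active`) happens strictly before the
  interact step, during which the nested calls run; on failure the call aborts with
  no effect and its nested calls never run. Returns the final active set and the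
  number of invocations that reached their interact step. -/
  def runSettle {F : Type} [DecidableEq F] (x : F) (t : CallTree) (A : Finset F) :
      Finset F × ℕ :=
    match t with
    | .node cs =>
      if x ∈ A then
        let r := runSettleList x cs (A.erase x)
        (r.1, r.2 + 1)
      else (A, 0)

  def runSettleList {F : Type} [DecidableEq F] (x : F) (ts : List CallTree)
      (A : Finset F) : Finset F × ℕ :=
    match ts with
    | [] => (A, 0)
    | t :: ts' =>
      let r := runSettle x t A
      let r' := runSettleList x ts' r.1
      (r'.1, r.2 + r'.2)
end


mutual
  theorem runSettle_notmem {F : Type} [DecidableEq F] (x : F) (t : CallTree)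
      (A : Finset F) (h : x ∉ A) : runSettle x t A = (A, 0) := by
    cases t with
    | node cs => rw [runSettle]; simp [h]

  theorem runSettleList_notmem {F : Type} [DecidableEq F] (x : F) (ts : List CallTree)
      (A : Finset F) (h : x ∉ A) : runSettleList x ts A = (A, 0) := by
    cases ts with
    | nil => rw [runSettleList]
    | cons t ts' =>
      rw [runSettleList]
      simp [runSettle_notmem x t A h, runSettleList_notmem x ts' A h]
end

/-- with the CEI ordering, at most one settle invocation on `x` in any
(well-founded, possibly re-entrant) call tree reaches its interact step; hence the
redistribution output is released at most once. -/
theorem cei_prevents_reentrant_double_settle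
    {F : Type} [DecidableEq F] (x : F) (t : CallTree) (A : Finset F) :
    (runSettle x t A).2 ≤ 1 := by
  cases t with
  | node cs =>
    rw [runSettle]
    by_cases h : x ∈ A
    · simp [h, runSettleList_notmem x cs (A.erase x) (Finset.notMem_erase x A)]
    · simp [h]
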